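/- arXiv:2103.00168 — 2 statements merged into one kernel-verified Lean document; each statement's English description precedes it below -/
import Mathlib

section
/- Let A be a real matrix with n+1 rows and n+2 columns such that Aᵀ = M · (D over 0) · Nᵀ, where M is an (n+2) × (n+2) orthogonal matrix, N is an (n+1) × (n+1) orthogonal matrix, D is an (n+1) × (n+1) diagonal matrix, and (D over 0) denotes the (n+2) × (n+1) matrix consisting of D on top of one zero row. Let m be the last column of M. Then the determinant of the (n+2) × (n+2) matrix whose first n+1 rows are the rows of A and whose last row is mᵀ equals (det M)·(det D)·(det N). -/
open Matrix

/-- If `Aᵀ = M · (D over 0) · Nᵀ` with `M, N` orthogonal and `D` diagonal, and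
`m` is the last column of `M`, then the determinant of `A` stacked over `mᵀ`
equals `det M · det D · det N`. -/
theorem det_stack_last_column_eq (n : ℕ)
    (A : Matrix (Fin (n + 1)) (Fin (n + 2)) ℝ)
    (M : Matrix (Fin (n + 2)) (Fin (n + 2)) ℝ)
    (N : Matrix (Fin (n + 1)) (Fin (n + 1)) ℝ)
    (d : Fin (n + 1) → ℝ)
    (hM : Mᵀ * M = 1) (hN : Nᵀ * N = 1)
    (hA : Aᵀ = M *
        (Matrix.of (Fin.snoc (fun i => Matrix.diagonal d i) 0) :
          Matrix (Fin (n + 2)) (Fin (n + 1)) ℝ) * Nᵀ) :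
    (Matrix.of (Fin.snoc (fun i => A i) (fun i => M i (Fin.last (n + 1)))) :
        Matrix (Fin (n + 2)) (Fin (n + 2)) ℝ).det =
      M.det * (Matrix.diagonal d).det * N.det := by
  set B : Matrix (Fin (n + 2)) (Fin (n + 1)) ℝ :=
    Matrix.of (Fin.snoc (fun i => Matrix.diagonal d i) 0) with hB
  set S : Matrix (Fin (n + 2)) (Fin (n + 2)) ℝ :=
    Matrix.of (Fin.snoc (fun i => A i) (fun i => M i (Fin.last (n + 1)))) with hS
  have hAM : A * M = N * Bᵀ := by
    have : A = N * Bᵀ * Mᵀ := by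
      have := congrArg Matrix.transpose hA
      simpa [Matrix.transpose_mul, Matrix.mul_assoc] using this
    rw [this, Matrix.mul_assoc, hM, Matrix.mul_one]
  have key : S * M = (Matrix.fromBlocks (N * Matrix.diagonal d) 0 0 1).submatrix
      (finSumFinEquiv (m := n+1) (n := 1)).symm (finSumFinEquiv (m := n+1) (n := 1)).symm := by
    ext i j
    refine Fin.lastCases ?_ ?_ i
    · have hlast : finSumFinEquiv.symm (Fin.last (n+1)) = Sum.inr (0 : Fin 1) := by
        rw [Equiv.symm_apply_eq]
        ext
        simp [finSumFinEquiv]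
      refine Fin.lastCases ?_ ?_ j
      · simp only [Matrix.mul_apply, hS, Matrix.of_apply, Fin.snoc_last,
          Matrix.submatrix_apply, hlast]
        have : ∑ k, M k (Fin.last (n+1)) * M k (Fin.last (n+1)) = (Mᵀ * M) (Fin.last (n+1)) (Fin.last (n+1)) := by
          simp [Matrix.mul_apply, Matrix.transpose_apply]
        rw [this, hM]
        simp
      · intro j'
        have hj : finSumFinEquiv.symm (Fin.castSucc j') = Sum.inl j' := by
          rw [Equiv.symm_apply_eq]
          ext
          simp [finSumFinEquiv, Fin.castSucc, Fin.castAdd]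
        simp only [Matrix.mul_apply, hS, Matrix.of_apply, Fin.snoc_last,
          Matrix.submatrix_apply, hlast, hj]
        have : ∑ k, M k (Fin.last (n+1)) * M k (Fin.castSucc j') = (Mᵀ * M) (Fin.last (n+1)) (Fin.castSucc j') := by
          simp [Matrix.mul_apply, Matrix.transpose_apply]
        rw [this, hM]
        simp [Matrix.one_apply, Fin.ext_iff]
        omega
    · intro i'
      have hi : finSumFinEquiv.symm (Fin.castSucc i') = Sum.inl i' := by
        rw [Equiv.symm_apply_eq]
        ext
        simp [finSumFinEquiv, Fin.castSucc, Fin.castAdd]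
      have hrow : (S * M) (Fin.castSucc i') j = (A * M) i' j := by
        simp [Matrix.mul_apply, hS]
      rw [hrow, hAM]
      refine Fin.lastCases ?_ ?_ j
      · have hlast : finSumFinEquiv.symm (Fin.last (n+1)) = Sum.inr (0 : Fin 1) := by
          rw [Equiv.symm_apply_eq]
          ext
          simp [finSumFinEquiv]
        simp [Matrix.mul_apply, hB, Matrix.submatrix_apply, hi, hlast,
          Matrix.transpose_apply, Fin.snoc_last]
      · intro j'
        have hj : finSumFinEquiv.symm (Fin.castSucc j') = Sum.inl j' := by
          rw [Equiv.symm_apply_eq]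
          ext
          simp [finSumFinEquiv, Fin.castSucc, Fin.castAdd]
        simp [Matrix.mul_apply, hB, Matrix.submatrix_apply, hi, hj,
          Matrix.transpose_apply, Fin.snoc_castSucc]
        refine Finset.sum_congr rfl fun x _ => ?_
        by_cases h : x = j'
        · simp [Matrix.diagonal_apply, h]
        · simp [Matrix.diagonal_apply, h, Ne.symm h]
  have hdet : S.det * M.det = N.det * (Matrix.diagonal d).det := by
    have := congrArg Matrix.det key
    simpa [Matrix.det_mul, Matrix.det_submatrix_equiv_self,
      Matrix.det_fromBlocks_zero₂₁] using this
  have hM2 : M.det * M.det = 1 := by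
    have := congrArg Matrix.det hM
    simpa [Matrix.det_mul, Matrix.det_transpose] using this
  have : S.det = S.det * (M.det * M.det) := by rw [hM2, mul_one]
  rw [this, ← mul_assoc, hdet]
  ring
end

section
/- Let F : ℝⁿ × ℝᵖ → ℝⁿ be continuously differentiable, and let S = {λ ∈ ℝᵖ : there exists x ∈ ℝⁿ with F(x, λ) = 0} be the solvability region. If λ* lies on the frontier (topological boundary) of S and x* ∈ ℝⁿ satisfies F(x*, λ*) = 0, then the partial derivative of F with respect to x at (x*, λ*) is not invertible; equivalently, the determinant of the n × n Jacobian matrix ∇ₓF(x*, λ*) equals zero. -/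
/-!
If `∂ₓF(x⋆, λ⋆)` were invertible, the implicit function theorem would give a solution branch
`λ ↦ x(λ)` with `F(x(λ), λ) = 0` for every `λ` near `λ⋆`, so `λ⋆` would be an interior point
of the solvability region rather than a frontier point.
-/

open Filter Topology

section ImplicitFunction

variable {𝕜 : Type*} [NontriviallyNormedField 𝕜]
  {E : Type*} [NormedAddCommGroup E] [NormedSpace 𝕜 E] [CompleteSpace E]
  {P : Type*} [NormedAddCommGroup P] [NormedSpace 𝕜 P] [CompleteSpace P]
  {G : Type*} [NormedAddCommGroup G] [NormedSpace 𝕜 G] [CompleteSpace G]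
  {f : E × P → G} {f' : E × P →L[𝕜] G} {x₀ : E} {l₀ : P}

theorem HasStrictFDerivAt.eventually_exists_apply_eq (hf : HasStrictFDerivAt f f' (x₀, l₀))
    (hinv : (f' ∘L .inl 𝕜 E P).IsInvertible) :
    ∀ᶠ l in 𝓝 l₀, ∃ x, f (x, l) = f (x₀, l₀) := by
  -- Mathlib's implicit function theorem solves for the second factor, so swap the factors.
  let e := ContinuousLinearEquiv.prodComm 𝕜 P E
  have hg : HasStrictFDerivAt (f ∘ e) (f' ∘L (e : P × E →L[𝕜] E × P)) (l₀, x₀) :=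
    hf.comp (l₀, x₀) e.hasStrictFDerivAt
  have hinv' : ((f' ∘L (e : P × E →L[𝕜] E × P)) ∘L .inr 𝕜 P E).IsInvertible := by
    convert hinv using 1
    ext; simp [e]
  filter_upwards [hg.eventually_apply_implicitFunctionOfProdDomain hinv'] with l hl
  exact ⟨_, hl⟩

theorem HasStrictFDerivAt.not_isInvertible_comp_inl_of_mem_frontier
    (hf : HasStrictFDerivAt f f' (x₀, l₀))
    (hl₀ : l₀ ∈ frontier {l | ∃ x, f (x, l) = f (x₀, l₀)}) :
    ¬(f' ∘L .inl 𝕜 E P).IsInvertible := fun hinv =>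
  hl₀.2 (mem_interior_iff_mem_nhds.2 (hf.eventually_exists_apply_eq hinv))

end ImplicitFunction

theorem ContinuousLinearMap.isInvertible_of_det_ne_zero {𝕜 : Type*} [NontriviallyNormedField 𝕜]
    [CompleteSpace 𝕜] {E : Type*} [NormedAddCommGroup E] [NormedSpace 𝕜 E]
    [FiniteDimensional 𝕜 E] {f : E →L[𝕜] E} (hf : f.det ≠ 0) : f.IsInvertible :=
  ⟨f.toContinuousLinearEquivOfDetNeZero hf, coe_toContinuousLinearEquivOfDetNeZero f hf⟩

/-- On the frontier of the solvability region, every solution `x⋆` of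
`F(x⋆, λ⋆) = 0` has a degenerate Jacobian with respect to `x`:
`det ∇ₓF(x⋆, λ⋆) = 0`. -/
theorem jacobian_degenerate_on_frontier (n p : ℕ)
    (F : (Fin n → ℝ) × (Fin p → ℝ) → (Fin n → ℝ))
    (hF : ContDiff ℝ 1 F)
    (xs : Fin n → ℝ) (ls : Fin p → ℝ)
    (hsol : F (xs, ls) = 0)
    (hfr : ls ∈ frontier {l : Fin p → ℝ | ∃ x : Fin n → ℝ, F (x, l) = 0}) :
    LinearMap.det ((fderiv ℝ (fun x => F (x, ls)) xs).toLinearMap) = 0 := by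
  by_contra hdet
  have hDF : HasStrictFDerivAt F (fderiv ℝ F (xs, ls)) (xs, ls) :=
    hF.contDiffAt.hasStrictFDerivAt one_ne_zero
  have hpartial : fderiv ℝ (fun x => F (x, ls)) xs = fderiv ℝ F (xs, ls) ∘L .inl ℝ _ _ :=
    (hDF.hasFDerivAt.comp xs (hasFDerivAt_prodMk_left xs ls)).fderiv
  rw [hpartial] at hdet
  rw [← hsol] at hfr
  exact hDF.not_isInvertible_comp_inl_of_mem_frontier hfr
    (ContinuousLinearMap.isInvertible_of_det_ne_zero hdet)
end
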